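/- Combining the recursive L² bound with the Hellinger bound: if ‖√π̂_t − √π_t‖_{L²} ≤ √2 Σ_{k=1}^t C^{(t−k)/2} ε_k and p_t = π_t/z_t, p̂_t = π̂_t/ẑ_t with z_t = ∫π_t > 0, then the Hellinger distance satisfies d_H(p̂_t, p_t) ≤ (2/√z_t)·Σ_{k=1}^t C^{(t−k)/2} ε_k. -/

import Mathlib

/-! In `L²(μ)` put `F = √π̂` and `G = √π`, so that `‖F‖ = √ẑ`, `‖G‖ = √z`, and `√(π̂/ẑ)`, `√(π/z)`
are the normalizations `F/‖F‖`, `G/‖G‖`. Splitting `F/‖F‖ - G/‖G‖ = (‖F‖⁻¹ - ‖G‖⁻¹) F + (F - G)/‖G‖`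
and using `|‖F‖ - ‖G‖| ≤ ‖F - G‖` bounds the distance of the normalizations by `2‖F - G‖/‖G‖`,
i.e. `d_H(p̂, p) ≤ (√2/√z) ‖√π̂ - √π‖`; the assumed bound on `‖√π̂ - √π‖` finishes. -/

namespace NormedSpace

variable {V : Type*} [NormedAddCommGroup V] [NormedSpace ℝ V]

lemma norm_inv_norm_sub_inv_norm_smul_le (x : V) {y : V} (hy : y ≠ 0) :
    ‖(‖x‖⁻¹ - ‖y‖⁻¹) • x‖ ≤ ‖x - y‖ / ‖y‖ := by
  rcases eq_or_ne x 0 with rfl | hx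
  · simp only [norm_zero, inv_zero, zero_sub, smul_zero]
    positivity
  have hx' : ‖x‖ ≠ 0 := norm_ne_zero_iff.mpr hx
  have hy' : 0 < ‖y‖ := norm_pos_iff.mpr hy
  have hcoeff : (‖x‖⁻¹ - ‖y‖⁻¹) * ‖x‖ = (‖y‖ - ‖x‖) / ‖y‖ := by field_simp
  calc ‖(‖x‖⁻¹ - ‖y‖⁻¹) • x‖ = |‖y‖ - ‖x‖| / ‖y‖ := by
        rw [norm_smul, Real.norm_eq_abs, ← abs_norm x, ← abs_mul, abs_norm, hcoeff, abs_div,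
          abs_of_pos hy']
    _ ≤ ‖x - y‖ / ‖y‖ := by
        gcongr
        exact (abs_norm_sub_norm_le y x).trans_eq (norm_sub_rev y x)

lemma norm_normalize_sub_normalize_le (x : V) {y : V} (hy : y ≠ 0) :
    ‖normalize x - normalize y‖ ≤ 2 * ‖x - y‖ / ‖y‖ := by
  have hsplit : normalize x - normalize y = (‖x‖⁻¹ - ‖y‖⁻¹) • x + ‖y‖⁻¹ • (x - y) := by
    simp only [normalize, sub_smul, smul_sub]
    abel
  calc ‖normalize x - normalize y‖
      ≤ ‖(‖x‖⁻¹ - ‖y‖⁻¹) • x‖ + ‖‖y‖⁻¹ • (x - y)‖ := hsplit ▸ norm_add_le _ _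
    _ ≤ ‖x - y‖ / ‖y‖ + ‖x - y‖ / ‖y‖ := by
        gcongr
        · exact norm_inv_norm_sub_inv_norm_smul_le x hy
        · rw [norm_smul, norm_inv, norm_norm, inv_mul_eq_div]
    _ = 2 * ‖x - y‖ / ‖y‖ := by ring

end NormedSpace

namespace MeasureTheory

variable {X : Type*} [MeasurableSpace X] {μ : Measure X}

lemma MemLp.norm_toLp_two_eq_sqrt_integral_sq {h : X → ℝ} (hh : MemLp h 2 μ) :
    ‖hh.toLp h‖ = √(∫ x, h x ^ 2 ∂μ) := by
  rw [← Real.sqrt_sq (norm_nonneg _), ← real_inner_self_eq_norm_sq, L2.inner_def]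
  congr 1
  refine integral_congr_ae ?_
  filter_upwards [hh.coeFn_toLp] with x hx
  simp [hx, sq]

variable {f g : X → ℝ}

lemma Integrable.memLp_two_sqrt (hf : Integrable f μ) (h0 : 0 ≤ᵐ[μ] f) :
    MemLp (fun x => √(f x)) 2 μ := by
  rw [memLp_two_iff_integrable_sq
    (Real.continuous_sqrt.comp_aestronglyMeasurable hf.aestronglyMeasurable)]
  refine hf.congr ?_
  filter_upwards [h0] with x hx
  exact (Real.sq_sqrt hx).symm

lemma Integrable.norm_toLp_sqrt (hf : Integrable f μ) (h0 : 0 ≤ᵐ[μ] f) :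
    ‖(hf.memLp_two_sqrt h0).toLp _‖ = √(∫ x, f x ∂μ) := by
  rw [MemLp.norm_toLp_two_eq_sqrt_integral_sq]
  congr 1
  refine integral_congr_ae ?_
  filter_upwards [h0] with x hx
  exact Real.sq_sqrt hx

lemma Integrable.toLp_sqrt_div_integral (hf : Integrable f μ) (h0 : 0 ≤ᵐ[μ] f)
    (hf' : MemLp (fun x => √(f x / ∫ y, f y ∂μ)) 2 μ) :
    hf'.toLp _ = NormedSpace.normalize ((hf.memLp_two_sqrt h0).toLp _) := by
  rw [NormedSpace.normalize, hf.norm_toLp_sqrt h0, ← MemLp.toLp_const_smul]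
  refine MemLp.toLp_congr _ _ (ae_of_all _ fun x => ?_)
  simp only [Pi.smul_apply, smul_eq_mul, Real.sqrt_div' _ (integral_nonneg_of_ae h0)]
  ring

lemma sqrt_integral_sq_sqrt_div_integral_sub_le (hf : Integrable f μ) (hf0 : 0 ≤ᵐ[μ] f)
    (hg : Integrable g μ) (hg0 : 0 ≤ᵐ[μ] g) (hg_pos : 0 < ∫ x, g x ∂μ) :
    √(∫ x, (√(f x / ∫ y, f y ∂μ) - √(g x / ∫ y, g y ∂μ)) ^ 2 ∂μ)
      ≤ 2 / √(∫ x, g x ∂μ) * √(∫ x, (√(f x) - √(g x)) ^ 2 ∂μ) := by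
  have hfn := (hf.div_const (∫ y, f y ∂μ)).memLp_two_sqrt
    (by filter_upwards [hf0] with x hx using div_nonneg hx (integral_nonneg_of_ae hf0))
  have hgn := (hg.div_const (∫ y, g y ∂μ)).memLp_two_sqrt
    (by filter_upwards [hg0] with x hx using div_nonneg hx hg_pos.le)
  set F := (hf.memLp_two_sqrt hf0).toLp _
  set G := (hg.memLp_two_sqrt hg0).toLp _
  have hG : G ≠ 0 := by
    rw [← norm_ne_zero_iff, hg.norm_toLp_sqrt hg0]
    positivity
  have hnormalized : √(∫ x, (√(f x / ∫ y, f y ∂μ) - √(g x / ∫ y, g y ∂μ)) ^ 2 ∂μ)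
      = ‖NormedSpace.normalize F - NormedSpace.normalize G‖ := by
    have h := (hfn.sub hgn).norm_toLp_two_eq_sqrt_integral_sq
    rw [MemLp.toLp_sub hfn hgn, hf.toLp_sqrt_div_integral hf0, hg.toLp_sqrt_div_integral hg0] at h
    exact h.symm
  have hdiff : √(∫ x, (√(f x) - √(g x)) ^ 2 ∂μ) = ‖F - G‖ := by
    have h := ((hf.memLp_two_sqrt hf0).sub (hg.memLp_two_sqrt hg0)).norm_toLp_two_eq_sqrt_integral_sq
    rw [MemLp.toLp_sub] at h
    exact h.symm
  rw [hnormalized, hdiff, ← hg.norm_toLp_sqrt hg0, div_mul_eq_mul_div]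
  exact NormedSpace.norm_normalize_sub_normalize_le F hG

end MeasureTheory

open MeasureTheory

theorem stmt9_general {X : Type*} [MeasurableSpace X] (μ : Measure X)
    (pit piHatt : X → ℝ) (C : ℝ) (ε : ℕ → ℝ)
    (t : ℕ)
    (hpi0 : ∀ x, 0 ≤ pit x) (hpiHat0 : ∀ x, 0 ≤ piHatt x)
    (hpiint : Integrable pit μ) (hpiHatint : Integrable piHatt μ)
    (z zHat : ℝ) (hz : z = ∫ x, pit x ∂μ) (hzHat : zHat = ∫ x, piHatt x ∂μ)
    (hzpos : 0 < z)
    (hL2 : Real.sqrt (∫ x, (Real.sqrt (piHatt x) - Real.sqrt (pit x)) ^ 2 ∂μ)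
      ≤ Real.sqrt 2 * ∑ k ∈ Finset.Icc 1 t, C ^ (((t : ℝ) - (k : ℝ)) / 2) * ε k) :
    (1 / Real.sqrt 2) *
        Real.sqrt (∫ x, (Real.sqrt (piHatt x / zHat) - Real.sqrt (pit x / z)) ^ 2 ∂μ)
      ≤ (2 / Real.sqrt z) *
        ∑ k ∈ Finset.Icc 1 t, C ^ (((t : ℝ) - (k : ℝ)) / 2) * ε k := by
  subst hz hzHat
  have hHellinger := sqrt_integral_sq_sqrt_div_integral_sub_le hpiHatint
    (ae_of_all _ hpiHat0) hpiint (ae_of_all _ hpi0) hzpos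
  calc _ ≤ 1 / √2 * (2 / √(∫ x, pit x ∂μ) *
          (√2 * ∑ k ∈ Finset.Icc 1 t, C ^ (((t : ℝ) - (k : ℝ)) / 2) * ε k)) := by
        gcongr
        exact hHellinger.trans (by gcongr)
    _ = _ := by field_simp

/-- Combining the recursive L² bound with the Hellinger bound: if
`‖√piHat_t − √pi_t‖_{L²} ≤ √2 Σ_{k=1}^t C^{(t−k)/2} ε_k`, then the Hellinger
distance between `p_t = pi_t/z_t` and `pHat_t = piHat_t/zHat_t` satisfies
`d_H(pHat_t, p_t) ≤ (2/√z_t) Σ_{k=1}^t C^{(t−k)/2} ε_k`. -/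
theorem stmt9 {X : Type*} [MeasurableSpace X] (μ : Measure X)
    (pit piHatt : X → ℝ) (C : ℝ) (hC : 0 < C) (ε : ℕ → ℝ)
    (hε : ∀ k, 1 ≤ k → 0 ≤ ε k) (t : ℕ) (ht : 1 ≤ t)
    (hpi0 : ∀ x, 0 ≤ pit x) (hpiHat0 : ∀ x, 0 ≤ piHatt x)
    (hpiint : Integrable pit μ) (hpiHatint : Integrable piHatt μ)
    (z zHat : ℝ) (hz : z = ∫ x, pit x ∂μ) (hzHat : zHat = ∫ x, piHatt x ∂μ)
    (hzpos : 0 < z) (hzHatpos : 0 < zHat)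
    (hL2 : Real.sqrt (∫ x, (Real.sqrt (piHatt x) - Real.sqrt (pit x)) ^ 2 ∂μ)
      ≤ Real.sqrt 2 * ∑ k ∈ Finset.Icc 1 t, C ^ (((t : ℝ) - (k : ℝ)) / 2) * ε k) :
    (1 / Real.sqrt 2) *
        Real.sqrt (∫ x, (Real.sqrt (piHatt x / zHat) - Real.sqrt (pit x / z)) ^ 2 ∂μ)
      ≤ (2 / Real.sqrt z) *
        ∑ k ∈ Finset.Icc 1 t, C ^ (((t : ℝ) - (k : ℝ)) / 2) * ε k :=
  stmt9_general μ pit piHatt C ε t hpi0 hpiHat0 hpiint hpiHatint z zHat hz hzHat hzpos hL2
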